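/- There is an adaptive deterministic exact learning algorithm for any finite class C of Boolean functions that asks at most (ETD(C)/log₂ ETD(C))·log₂|C| + ETD(C) membership queries. -/

import Mathlib

variable {X : Type*} [Fintype X] [DecidableEq X]

/-- `T` is a specifying set for `h` with respect to `C`. -/
def IsSpecSet (C : Finset (X → Bool)) (h : X → Bool) (T : Finset X) : Prop :=
  (C.filter (fun f => ∀ x ∈ T, f x = h x)).card ≤ 1

/-- The minimum size of a specifying set for `h` with respect to `C`. -/
noncomputable def specNum (C : Finset (X → Bool)) (h : X → Bool) : ℕ :=
  sInf {k | ∃ T : Finset X, T.card = k ∧ IsSpecSet C h T}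

/-- The extended teaching dimension of `C`. -/
noncomputable def ETD (C : Finset (X → Bool)) : ℕ :=
  sSup {k | ∃ h : X → Bool, specNum C h = k}

/-- The transcript of answers of an adaptive deterministic algorithm. -/
def transcript {Y : Type*} (query : List Bool → Y) (f : Y → Bool) : ℕ → List Bool
  | 0 => []
  | k + 1 => transcript query f k ++ [f (query (transcript query f k))]

/-!
By induction on the version space `V`, with `n = #V` and `d` a bound on the size of specifying
sets, build a decision tree of depth at most `queryBound d n = d log n / log d + d`. If some point
splits `V` with both sides of size at least `(1 - d ^ (-1 / d)) n`, query it: each side keeps at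
most `d ^ (-1 / d) n` candidates, which pays for the query. Otherwise query greedily the points of
a specifying set for the majority vote of `V`. Answers agreeing with the majority leave at most one
candidate after at most `d` queries, and a disagreeing answer at the `j`-th query leaves at most
`min ((1 - d ^ (-1 / d)) n, n / j) ≤ d ^ (-j / d) n` candidates, on which the induction
hypothesis fits into the remaining budget.
-/

open Finset Real

/-- `node x b t₁ t₂` queries `x`, then continues with `t₁` if the answer is `b` and with
`t₂` otherwise. -/
inductive DecisionTree (α : Type*)
  | leaf (g : α → Bool)
  | node (x : α) (b : Bool) (tEq tNe : DecisionTree α)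

namespace DecisionTree

variable {α : Type*}

def depth : DecisionTree α → ℕ
  | leaf _ => 0
  | node _ _ t₁ t₂ => max t₁.depth t₂.depth + 1

def eval : DecisionTree α → (α → Bool) → α → Bool
  | leaf g, _ => g
  | node x b t₁ t₂, f => if f x = b then t₁.eval f else t₂.eval f

def next : DecisionTree α → Bool → DecisionTree α
  | leaf g, _ => leaf g
  | node _ b t₁ t₂, c => if c = b then t₁ else t₂

noncomputable def query [Nonempty α] : DecisionTree α → α
  | leaf _ => Classical.arbitrary α
  | node x _ _ _ => x

def result : DecisionTree α → α → Bool
  | leaf g => g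
  | node _ _ _ _ => fun _ => false

def follow (t : DecisionTree α) (answers : List Bool) : DecisionTree α :=
  answers.foldl next t

variable [Nonempty α]

noncomputable def step (f : α → Bool) (t : DecisionTree α) : DecisionTree α :=
  t.next (f t.query)

lemma follow_transcript (t : DecisionTree α) (f : α → Bool) (m : ℕ) :
    t.follow (transcript (fun l => (t.follow l).query) f m) = (step f)^[m] t := by
  induction m with
  | zero => rfl
  | succ m ih =>
    simp only [follow] at ih ⊢
    rw [transcript, List.foldl_append, ih, Function.iterate_succ_apply']
    rfl

lemma iterate_step_of_depth_le (f : α → Bool) :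
    ∀ (t : DecisionTree α) {m : ℕ}, t.depth ≤ m → (step f)^[m] t = leaf (t.eval f)
  | leaf _, m, _ => Function.iterate_fixed rfl m
  | node x b t₁ t₂, m + 1, hm => by
    have hm' : max t₁.depth t₂.depth ≤ m := by simpa [depth] using hm
    rw [Function.iterate_succ_apply]
    by_cases hx : f x = b
    · simpa [step, next, query, eval, hx] using
        iterate_step_of_depth_le f t₁ (le_of_max_le_left hm')
    · simpa [step, next, query, eval, hx] using
        iterate_step_of_depth_le f t₂ (le_of_max_le_right hm')

lemma result_follow_transcript (t : DecisionTree α) (f : α → Bool) {m : ℕ}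
    (hm : t.depth ≤ m) :
    (t.follow (transcript (fun l => (t.follow l).query) f m)).result = t.eval f := by
  rw [follow_transcript, iterate_step_of_depth_le f t hm, result]

end DecisionTree

section Numerics

/-- `exp (-rate d) = d ^ (-1 / d)`: `d` queries, each keeping at most this fraction of the
candidates, divide their number by `d`; this is where `queryBound` comes from. -/
noncomputable def rate (d : ℕ) : ℝ := log d / d

noncomputable def queryBound (d n : ℕ) : ℝ := (d / logb 2 d) * logb 2 n + d

lemma queryBound_eq {d : ℕ} (hd : 2 ≤ d) (n : ℕ) :
    queryBound d n = d * log n / log d + d := by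
  have : log d ≠ 0 := (log_pos (by exact_mod_cast hd)).ne'
  simp only [queryBound, logb]
  field_simp

lemma rate_le_exp_neg_one (d : ℕ) : rate d ≤ exp (-1) := by
  rcases Nat.eq_zero_or_pos d with rfl | hd
  · simp [rate, (exp_pos _).le]
  have hd' : (0 : ℝ) < d := by exact_mod_cast hd
  have hlog : log (d / exp 1) ≤ d / exp 1 - 1 := log_le_sub_one_of_pos (by positivity)
  rw [log_div hd'.ne' (exp_pos 1).ne', log_exp] at hlog
  rw [rate, div_le_iff₀ hd', exp_neg]
  linarith [div_eq_inv_mul (d : ℝ) (exp 1)]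

/-- If `j rate d ≤ 1`, the first bound on `m` suffices, as
`1 - exp (-rate d) ≤ rate d ≤ exp (-1)`. Otherwise the second does: `u ↦ u exp (-u)` decreases
on `[1, log d]` (that is, `log y / y` decreases on `[e, d]`) and equals `rate d` at `u = log d`. -/
lemma le_exp_neg_mul_rate {d j : ℕ} {m n : ℝ} (hd : 2 ≤ d) (hjd : j ≤ d) (hm : 0 ≤ m)
    (hsmall : m < (1 - exp (-rate d)) * n) (hjm : j * m ≤ n) :
    m ≤ exp (-(j * rate d)) * n := by
  have hd' : (2 : ℝ) ≤ d := by exact_mod_cast hd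
  have hrate : 0 < rate d := div_pos (log_pos (by linarith)) (by linarith)
  have hθ : 1 - exp (-rate d) ≤ rate d := by linarith [add_one_le_exp (-rate d)]
  have hn : 0 ≤ n := by nlinarith [exp_pos (-rate d)]
  rcases le_total (j * rate d) 1 with hu | hu
  · have : 1 - exp (-rate d) ≤ exp (-(j * rate d)) :=
      hθ.trans ((rate_le_exp_neg_one d).trans (exp_le_exp.2 (by linarith)))
    nlinarith
  · have hj : (0 : ℝ) < j := by
      rcases Nat.eq_zero_or_pos j with rfl | hj
      · simp only [Nat.cast_zero, zero_mul] at hu; linarith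
      · exact_mod_cast hj
    have hud : j * rate d ≤ log d := by
      have : (j : ℝ) ≤ d := by exact_mod_cast hjd
      calc j * rate d ≤ d * rate d := by gcongr
        _ = log d := by rw [rate]; field_simp
    have hanti := log_div_self_antitoneOn (Set.mem_Ici.2 (exp_le_exp.2 hu))
      (Set.mem_Ici.2 ((exp_le_exp.2 hu).trans (exp_le_exp.2 hud))) (exp_le_exp.2 hud)
    simp only [log_exp, exp_log (show (0 : ℝ) < d by linarith)] at hanti
    have hx : rate d ≤ j * rate d * exp (-(j * rate d)) := by
      rw [exp_neg, ← div_eq_mul_inv]; exact hanti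
    nlinarith

lemma add_queryBound_le {d m n j : ℕ} (hd : 2 ≤ d) (hm : 1 ≤ m)
    (hmn : (m : ℝ) ≤ exp (-(j * rate d)) * n) : j + queryBound d m ≤ queryBound d n := by
  have hd' : (2 : ℝ) ≤ d := by exact_mod_cast hd
  have hm' : (0 : ℝ) < m := by exact_mod_cast hm
  have hlogd : 0 < log d := log_pos (by linarith)
  have hn : (0 : ℝ) < n := by
    by_contra hn
    nlinarith [exp_pos (-(j * rate d))]
  have hlog : log m ≤ log n - j * rate d := by
    have := log_le_log hm' hmn
    rwa [log_mul (exp_pos _).ne' hn.ne', log_exp, neg_add_eq_sub] at this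
  have hjlog : (j : ℝ) * log d ≤ d * (log n - log m) := by
    have : (d : ℝ) * rate d = log d := by rw [rate]; field_simp
    nlinarith
  have : (j : ℝ) + d * log m / log d = (j * log d + d * log m) / log d := by field_simp
  rw [queryBound_eq hd, queryBound_eq hd, ← add_assoc, this]
  gcongr ?_ / _ + _
  linarith

lemma le_queryBound {d : ℕ} (hd : 2 ≤ d) (n : ℕ) : (d : ℝ) ≤ queryBound d n := by
  have : 0 < log d := log_pos (by exact_mod_cast hd)
  have : 0 ≤ log n := log_natCast_nonneg n
  rw [queryBound_eq hd]
  linarith [show 0 ≤ d * log n / log d by positivity]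

lemma queryBound_of_le_one {d : ℕ} (hd : d ≤ 1) (n : ℕ) : queryBound d n = d := by
  interval_cases d <;> simp [queryBound]

end Numerics

section VersionSpaces

variable {α : Type*}

/-- `V` can be learned exactly with at most `k` adaptive membership queries. -/
def LearnableWithin (V : Finset (α → Bool)) (k : ℝ) : Prop :=
  ∃ t : DecisionTree α, (∀ f ∈ V, t.eval f = f) ∧ (t.depth : ℝ) ≤ k

lemma LearnableWithin.mono {V : Finset (α → Bool)} {k k' : ℝ} (hV : LearnableWithin V k)
    (hk : k ≤ k') : LearnableWithin V k' :=
  let ⟨t, ht, hdepth⟩ := hV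
  ⟨t, ht, hdepth.trans hk⟩

lemma learnableWithin_zero_of_card_le_one {V : Finset (α → Bool)} (hV : #V ≤ 1) :
    LearnableWithin V 0 := by
  obtain ⟨g, hg⟩ := card_le_one_iff_subset_singleton.1 hV
  exact ⟨.leaf g, fun f hf => (mem_singleton.1 (hg hf)).symm, by simp [DecisionTree.depth]⟩

lemma LearnableWithin.of_split {V : Finset (α → Bool)} {k : ℝ} (h : α → Bool) (x : α)
    (hEq : LearnableWithin {f ∈ V | f x = h x} k)
    (hNe : LearnableWithin {f ∈ V | f x ≠ h x} k) : LearnableWithin V (k + 1) := by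
  obtain ⟨t₁, ht₁, hdepth₁⟩ := hEq
  obtain ⟨t₂, ht₂, hdepth₂⟩ := hNe
  refine ⟨.node x (h x) t₁ t₂, fun f hf => ?_, ?_⟩
  · by_cases hfx : f x = h x
    · simpa [DecisionTree.eval, hfx] using ht₁ f (mem_filter.2 ⟨hf, hfx⟩)
    · simpa [DecisionTree.eval, hfx] using ht₂ f (mem_filter.2 ⟨hf, hfx⟩)
  · simp only [DecisionTree.depth, Nat.cast_add, Nat.cast_max, Nat.cast_one]
    gcongr
    exact max_le hdepth₁ hdepth₂

lemma LearnableWithin.exists_algorithm [Nonempty α] {V : Finset (α → Bool)} {k : ℝ}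
    (hV : LearnableWithin V k) :
    ∃ (q : ℕ) (query : List Bool → α) (out : List Bool → α → Bool),
      (q : ℝ) ≤ k ∧ ∀ f ∈ V, out (transcript query f q) = f := by
  obtain ⟨t, ht, hdepth⟩ := hV
  exact ⟨t.depth, fun l => (t.follow l).query, fun l => (t.follow l).result, hdepth,
    fun f hf => (t.result_follow_transcript f le_rfl).trans (ht f hf)⟩

def majority (V : Finset (α → Bool)) (x : α) : Bool :=
  decide (#{f ∈ V | f x = false} ≤ #{f ∈ V | f x = true})

lemma card_filter_ne_majority_le (V : Finset (α → Bool)) (x : α) :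
    #{f ∈ V | f x ≠ majority V x} ≤ #{f ∈ V | f x = majority V x} := by
  by_cases hc : #{f ∈ V | f x = false} ≤ #{f ∈ V | f x = true}
  · simp [majority, hc]
  · simpa [majority, hc] using (not_le.1 hc).le

lemma learnableWithin_of_card_le_exp {d j : ℕ} {V D : Finset (α → Bool)} (hd : 2 ≤ d)
    (hj : 1 ≤ j) (hjd : j ≤ d) (hsub : ∀ W ⊂ V, LearnableWithin W (queryBound d #W))
    (hDV : D ⊆ V) (hD : (#D : ℝ) ≤ exp (-(j * rate d)) * #V) :
    LearnableWithin D (queryBound d #V - j) := by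
  rcases Nat.eq_zero_or_pos #D with hD0 | hD0
  · have : (j : ℝ) ≤ d := by exact_mod_cast hjd
    exact (learnableWithin_zero_of_card_le_one (by omega)).mono
      (by linarith [le_queryBound hd #V])
  · have hshrink : exp (-(j * rate d)) < 1 := by
      have : 0 < rate d := div_pos (log_pos (by exact_mod_cast hd)) (by positivity)
      have : (1 : ℝ) ≤ j := by exact_mod_cast hj
      exact exp_lt_one_iff.2 (by nlinarith)
    have hlt : #D < #V := by
      have : (0 : ℝ) < #D := by exact_mod_cast hD0
      exact_mod_cast (show (#D : ℝ) < #V by nlinarith [exp_pos (-(j * rate d))])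
    exact (hsub D (hDV.ssubset_of_ne fun hDV' => hlt.ne (congrArg card hDV'))).mono
      (by linarith [add_queryBound_le hd hD0 hD])

end VersionSpaces

lemma IsSpecSet.mono {V W : Finset (X → Bool)} {h : X → Bool} {T : Finset X} (hWV : W ⊆ V)
    (hV : IsSpecSet V h T) : IsSpecSet W h T :=
  (card_le_card (filter_subset_filter _ hWV)).trans hV

lemma isSpecSet_empty_iff {V : Finset (X → Bool)} {h : X → Bool} :
    IsSpecSet V h ∅ ↔ #V ≤ 1 := by
  simp [IsSpecSet]

lemma isSpecSet_insert_iff {V : Finset (X → Bool)} {h : X → Bool} {x : X} {T : Finset X} :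
    IsSpecSet V h (insert x T) ↔ IsSpecSet {f ∈ V | f x = h x} h T := by
  simp only [IsSpecSet, filter_filter, forall_mem_insert]

lemma exists_isSpecSet_card_le_ETD (C : Finset (X → Bool)) (h : X → Bool) :
    ∃ T : Finset X, #T ≤ ETD C ∧ IsSpecSet C h T := by
  have huniv : ∀ h', IsSpecSet C h' univ := fun h' =>
    card_le_one.2 fun f hf g hg => funext fun x =>
      ((mem_filter.1 hf).2 x (mem_univ x)).trans ((mem_filter.1 hg).2 x (mem_univ x)).symm
  obtain ⟨T, hTcard, hT⟩ : specNum C h ∈ {k | ∃ T : Finset X, #T = k ∧ IsSpecSet C h T} :=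
    Nat.sInf_mem ⟨_, univ, rfl, huniv h⟩
  refine ⟨T, ?_, hT⟩
  rw [hTcard]
  refine le_csSup ⟨Fintype.card X, ?_⟩ ⟨h, rfl⟩
  rintro _ ⟨h', rfl⟩
  exact Nat.sInf_le ⟨univ, card_univ, huniv h'⟩

/-- The greedy phase, run when no query splits `V` in a balanced way: the points of a specifying
set `R` for `h` are queried in decreasing order of disagreement with `h`. After `i` of them, the
invariant says each earlier answer disagreeing with `h` removed at least as many candidates as any
remaining point can, so a disagreeing answer at step `i + 1` leaves at most `#V / (i + 1)`. -/
lemma learnableWithin_greedy {d : ℕ} {V : Finset (X → Bool)} {h : X → Bool} (hd : 2 ≤ d)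
    (hsub : ∀ W ⊂ V, LearnableWithin W (queryBound d #W))
    (hsmall : ∀ x, (#{f ∈ V | f x ≠ h x} : ℝ) < (1 - exp (-rate d)) * #V) (R : Finset X) :
    ∀ (i : ℕ) (W : Finset (X → Bool)), W ⊆ V → i + #R ≤ d →
      (∀ x ∈ R, i * #{f ∈ W | f x ≠ h x} + #W ≤ #V) → IsSpecSet W h R →
      LearnableWithin W (queryBound d #V - i) := by
  induction R using Finset.strongInduction with
  | H R IHR =>
  intro i W hWV hiR hinv hspec
  rcases R.eq_empty_or_nonempty with rfl | hR
  · have : (i : ℝ) ≤ d := by exact_mod_cast (show i ≤ d by simpa using hiR)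
    exact (learnableWithin_zero_of_card_le_one (isSpecSet_empty_iff.1 hspec)).mono
      (by linarith [le_queryBound hd #V])
  obtain ⟨x, hxR, hxmax⟩ := exists_max_image R (fun y => #{f ∈ W | f y ≠ h y}) hR
  have hsplit : #{f ∈ W | f x = h x} + #{f ∈ W | f x ≠ h x} = #W :=
    card_filter_add_card_filter_not _
  have hi : i + 1 ≤ d := by have := card_pos.2 hR; omega
  have hAgree : LearnableWithin {f ∈ W | f x = h x} (queryBound d #V - (i + 1 : ℕ)) := by
    refine IHR (R.erase x) (erase_ssubset hxR) (i + 1) _ ((filter_subset _ _).trans hWV)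
      ?_ ?_ ?_
    · rw [card_erase_of_mem hxR]; omega
    · intro y hy
      have hy' := mem_of_mem_erase hy
      have hmono : #{f ∈ {f ∈ W | f x = h x} | f y ≠ h y} ≤ #{f ∈ W | f y ≠ h y} :=
        card_le_card (filter_subset_filter _ (filter_subset _ _))
      have := Nat.mul_le_mul_left i hmono
      have := hxmax y hy'
      have := hinv y hy'
      rw [add_mul, one_mul]
      omega
    · rwa [← isSpecSet_insert_iff, insert_erase hxR]
  have hDisagree : LearnableWithin {f ∈ W | f x ≠ h x} (queryBound d #V - (i + 1 : ℕ)) := by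
    refine learnableWithin_of_card_le_exp hd (Nat.le_add_left 1 i) hi hsub
      ((filter_subset _ _).trans hWV) (le_exp_neg_mul_rate hd hi (Nat.cast_nonneg _) ?_ ?_)
    · refine lt_of_le_of_lt ?_ (hsmall x)
      exact_mod_cast card_le_card (filter_subset_filter _ hWV)
    · have := hinv x hxR
      have : (i + 1) * #{f ∈ W | f x ≠ h x} ≤ #V := by rw [add_mul, one_mul]; omega
      exact_mod_cast this
  exact (hAgree.of_split h x hDisagree).mono (by push_cast; linarith)

theorem learnableWithin_queryBound {d : ℕ} (hd : 2 ≤ d) (V : Finset (X → Bool))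
    (hV : ∀ h, ∃ T : Finset X, #T ≤ d ∧ IsSpecSet V h T) :
    LearnableWithin V (queryBound d #V) := by
  induction V using Finset.strongInduction with
  | H V IH =>
  have hsub : ∀ W ⊂ V, LearnableWithin W (queryBound d #W) := fun W hW =>
    IH W hW fun h => (hV h).imp fun _ hT => ⟨hT.1, hT.2.mono hW.subset⟩
  by_cases hbalanced : ∃ x, (1 - exp (-rate d)) * #V ≤ #{f ∈ V | f x ≠ majority V x}
  · obtain ⟨x, hx⟩ := hbalanced
    have hsplit : #{f ∈ V | f x = majority V x} + #{f ∈ V | f x ≠ majority V x} = #V :=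
      card_filter_add_card_filter_not _
    have hmaj : (#{f ∈ V | f x ≠ majority V x} : ℝ) ≤ #{f ∈ V | f x = majority V x} := by
      exact_mod_cast card_filter_ne_majority_le V x
    have hAgree : (#{f ∈ V | f x = majority V x} : ℝ) ≤ exp (-((1 : ℕ) * rate d)) * #V := by
      have : (#{f ∈ V | f x = majority V x} : ℝ) + #{f ∈ V | f x ≠ majority V x} = #V := by
        exact_mod_cast hsplit
      rw [Nat.cast_one, one_mul]
      linarith
    have hd1 : 1 ≤ d := by omega
    simpa using LearnableWithin.of_split (majority V) x
      (learnableWithin_of_card_le_exp hd le_rfl hd1 hsub (filter_subset _ _) hAgree)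
      (learnableWithin_of_card_le_exp hd le_rfl hd1 hsub (filter_subset _ _) (hmaj.trans hAgree))
  · simp only [not_exists, not_le] at hbalanced
    obtain ⟨T, hTd, hT⟩ := hV (majority V)
    simpa using learnableWithin_greedy hd hsub hbalanced T 0 V subset_rfl (by simpa using hTd)
      (by simp) hT

lemma learnableWithin_of_le_one {d : ℕ} (hd : d ≤ 1) (V : Finset (X → Bool))
    (hV : ∀ h, ∃ T : Finset X, #T ≤ d ∧ IsSpecSet V h T) : LearnableWithin V d := by
  obtain ⟨T, hTd, hT⟩ := hV (majority V)
  rcases T.eq_empty_or_nonempty with rfl | ⟨x, hx⟩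
  · exact (learnableWithin_zero_of_card_le_one (isSpecSet_empty_iff.1 hT)).mono
      (Nat.cast_nonneg d)
  have hTx : T = {x} :=
    eq_singleton_iff_unique_mem.2 ⟨hx, fun y hy => card_le_one.1 (hTd.trans hd) y hy x hx⟩
  have hd1 : d = 1 := by have := card_pos.2 ⟨x, hx⟩; omega
  rw [hTx, ← insert_empty, isSpecSet_insert_iff, isSpecSet_empty_iff] at hT
  subst hd1
  simpa using LearnableWithin.of_split (majority V) x (learnableWithin_zero_of_card_le_one hT)
    (learnableWithin_zero_of_card_le_one ((card_filter_ne_majority_le V x).trans hT))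

lemma learnableWithin_queryBound_ETD (C : Finset (X → Bool)) :
    LearnableWithin C (queryBound (ETD C) #C) := by
  by_cases hd : 2 ≤ ETD C
  · exact learnableWithin_queryBound hd C (exists_isSpecSet_card_le_ETD C)
  · rw [queryBound_of_le_one (by omega)]
    exact learnableWithin_of_le_one (by omega) C (exists_isSpecSet_card_le_ETD C)

/-- There is an adaptive deterministic exact learning algorithm for any finite
class `C` of Boolean functions asking at most
`(ETD(C)/log₂ ETD(C))·log₂|C| + ETD(C)` membership queries. -/
theorem stmt9 [Nonempty X] (C : Finset (X → Bool)) :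
    ∃ (q : ℕ) (query : List Bool → X) (out : List Bool → (X → Bool)),
      (q : ℝ) ≤ ((ETD C : ℝ) / Real.logb 2 (ETD C)) * Real.logb 2 (C.card)
          + (ETD C : ℝ) ∧
        ∀ f ∈ C, out (transcript query f q) = f :=
  (learnableWithin_queryBound_ETD C).exists_algorithm
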